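/- Let (X, 𝒰, ∫) be a Daniell space and let f : X → ℝ. If f ≃ ∑ f_n and f ≃ ∑ g_n with f_n, g_n ∈ 𝒰, then ∑_{n=1}^∞ ∫ f_n = ∑_{n=1}^∞ ∫ g_n. -/

import Mathlib

/-!
Interleaving `fs` with `-gs` gives a representation `d` of `0` whose integral series sums to
`∑ ∫ fₙ - ∑ ∫ gₙ`, so it suffices that such a `d` has `∑ ∫ dₙ = 0`. Wherever `∑ |dₙ x|`
converges, the partial sum `∑_{n<M} dₙ x` is minus the tail of a series with sum `0`, hence
bounded in absolute value by `∑_{k≥M} |dₖ x|`. Condition (II), applied to the increasing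
sequence `(h ⊔ 0) ⊓ ∑_{k<N} gₖ`, turns such a bound into an integral bound even though it holds
only where the series converges: `|∑_{n<M} ∫ dₙ| ≤ ∑_{k≥M} ∫ |dₖ|`, which tends to `0`.
-/

open Filter Topology

/-- A Daniell space: a Riesz space `U` of real-valued functions on `X` together with a
positive linear functional `integral` satisfying the Daniell continuity condition (II). -/
structure DaniellSpace (X : Type*) where
  U : Set (X → ℝ)
  integral : (X → ℝ) → ℝ
  zero_mem : (0 : X → ℝ) ∈ U
  add_mem : ∀ {f g : X → ℝ}, f ∈ U → g ∈ U → f + g ∈ U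
  smul_mem : ∀ (c : ℝ) {f : X → ℝ}, f ∈ U → c • f ∈ U
  sup_mem : ∀ {f g : X → ℝ}, f ∈ U → g ∈ U → f ⊔ g ∈ U
  inf_mem : ∀ {f g : X → ℝ}, f ∈ U → g ∈ U → f ⊓ g ∈ U
  integral_add : ∀ {f g : X → ℝ}, f ∈ U → g ∈ U →
    integral (f + g) = integral f + integral g
  integral_smul : ∀ (c : ℝ) {f : X → ℝ}, f ∈ U → integral (c • f) = c * integral f
  integral_nonneg : ∀ {f : X → ℝ}, f ∈ U → (∀ x, 0 ≤ f x) → 0 ≤ integral f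
  integral_tendsto_zero : ∀ f : ℕ → X → ℝ, (∀ n, f n ∈ U) → Antitone f →
    (∀ x, Tendsto (fun n => f n x) atTop (𝓝 (0 : ℝ))) →
    Tendsto (fun n => integral (f n)) atTop (𝓝 (0 : ℝ))

/-- `f ≃ ∑ fₙ` : the `fₙ` belong to `U`, `∑ ∫|fₙ| < ∞`, and `f x = ∑ fₙ x` at every
point where the series converges absolutely. -/
def DaniellSpace.Rep {X : Type*} (D : DaniellSpace X) (f : X → ℝ) (fs : ℕ → X → ℝ) : Prop :=
  (∀ n, fs n ∈ D.U) ∧ (Summable fun n => D.integral |fs n|) ∧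
  ∀ x, (Summable fun n => |fs n x|) → HasSum (fun n => fs n x) (f x)

/-- The extension `𝒰*` of `𝒰`. -/
def DaniellSpace.Ustar {X : Type*} (D : DaniellSpace X) : Set (X → ℝ) :=
  {f | ∃ fs, D.Rep f fs}

-- The integral on `𝒰*`: `∫ f = ∑ ∫ fₙ` for any representation `f ≃ ∑ fₙ`
-- (the value is independent of the representation).
open Classical in
noncomputable def DaniellSpace.integralStar {X : Type*} (D : DaniellSpace X)
    (f : X → ℝ) : ℝ :=
  if h : ∃ fs, D.Rep f fs then ∑' n, D.integral (h.choose n) else 0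

/-- A Daniell space is complete if `f ≃ ∑ fₙ` with all `fₙ ∈ 𝒰` implies `f ∈ 𝒰`. -/
def DaniellSpace.Complete {X : Type*} (D : DaniellSpace X) : Prop :=
  ∀ (f : X → ℝ) (fs : ℕ → X → ℝ), D.Rep f fs → f ∈ D.U

/-- A null set: its characteristic function is a null function. -/
def DaniellSpace.NullSet {X : Type*} (D : DaniellSpace X) (S : Set X) : Prop :=
  S.indicator (fun _ => (1 : ℝ)) ∈ D.U ∧ D.integral (S.indicator fun _ => (1 : ℝ)) = 0

open Finset

theorem tendsto_min_sum_range_of_le_tsum {g : ℕ → ℝ} (hg : ∀ n, 0 ≤ g n) {a : ℝ}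
    (ha : Summable g → a ≤ ∑' n, g n) :
    Tendsto (fun N => min a (∑ n ∈ range N, g n)) atTop (𝓝 a) := by
  by_cases hs : Summable g
  · have := (tendsto_const_nhds (x := a)).min hs.hasSum.tendsto_sum_nat
    rwa [min_eq_left (ha hs)] at this
  · refine tendsto_const_nhds.congr' ?_
    filter_upwards [((not_summable_iff_tendsto_nat_atTop_of_nonneg hg).1 hs).eventually_ge_atTop a]
      with N hN
    exact (min_eq_left hN).symm

section Interleave

variable {α M : Type*}

theorem HasSum.interleave [AddCommMonoid M] [TopologicalSpace M] [ContinuousAdd M]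
    (φ : α → M) {a b : Stream' α} {s t : M} (ha : HasSum (fun n => φ (a n)) s)
    (hb : HasSum (fun n => φ (b n)) t) : HasSum (fun n => φ ((a ⋈ b) n)) (s + t) := by
  refine HasSum.even_add_odd ?_ ?_
  · convert ha using 2 with n
    exact congrArg φ (Stream'.get_interleave_left n a b)
  · convert hb using 2 with n
    exact congrArg φ (Stream'.get_interleave_right n a b)

variable [UniformSpace M] [AddCommGroup M] [IsUniformAddGroup M] [CompleteSpace M]

theorem Summable.of_interleave_left (φ : α → M) {a b : Stream' α}
    (h : Summable fun n => φ ((a ⋈ b) n)) : Summable fun n => φ (a n) := by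
  convert h.comp_injective (mul_right_injective₀ (two_ne_zero' ℕ)) using 2 with n
  exact congrArg φ (Stream'.get_interleave_left n a b).symm

theorem Summable.of_interleave_right (φ : α → M) {a b : Stream' α}
    (h : Summable fun n => φ ((a ⋈ b) n)) : Summable fun n => φ (b n) := by
  convert h.comp_injective ((add_left_injective 1).comp (mul_right_injective₀ (two_ne_zero' ℕ)))
    using 2 with n
  exact congrArg φ (Stream'.get_interleave_right n a b).symm

end Interleave

namespace DaniellSpace

variable {X : Type*} (D : DaniellSpace X)

lemma neg_mem {f : X → ℝ} (hf : f ∈ D.U) : -f ∈ D.U := by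
  simpa using D.smul_mem (-1) hf

lemma sub_mem {f g : X → ℝ} (hf : f ∈ D.U) (hg : g ∈ D.U) : f - g ∈ D.U := by
  simpa [sub_eq_add_neg] using D.add_mem hf (D.neg_mem hg)

lemma abs_mem {f : X → ℝ} (hf : f ∈ D.U) : |f| ∈ D.U :=
  D.sup_mem hf (D.neg_mem hf)

lemma sum_mem {ι : Type*} (s : Finset ι) {f : ι → X → ℝ} (hf : ∀ i ∈ s, f i ∈ D.U) :
    ∑ i ∈ s, f i ∈ D.U := by
  classical
  induction s using Finset.induction_on with
  | empty => simpa using D.zero_mem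
  | insert i s hi ih =>
    rw [sum_insert hi]
    exact D.add_mem (hf i (mem_insert_self i s)) (ih fun j hj => hf j (mem_insert_of_mem hj))

lemma integral_zero : D.integral 0 = 0 := by
  simpa using D.integral_smul 0 D.zero_mem

lemma integral_neg {f : X → ℝ} (hf : f ∈ D.U) : D.integral (-f) = -D.integral f := by
  simpa using D.integral_smul (-1) hf

lemma integral_sub {f g : X → ℝ} (hf : f ∈ D.U) (hg : g ∈ D.U) :
    D.integral (f - g) = D.integral f - D.integral g := by
  simpa [sub_eq_add_neg, D.integral_neg hg] using D.integral_add hf (D.neg_mem hg)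

lemma integral_sum {ι : Type*} (s : Finset ι) {f : ι → X → ℝ} (hf : ∀ i ∈ s, f i ∈ D.U) :
    D.integral (∑ i ∈ s, f i) = ∑ i ∈ s, D.integral (f i) := by
  classical
  induction s using Finset.induction_on with
  | empty => simpa using D.integral_zero
  | insert i s hi ih =>
    have hs : ∀ j ∈ s, f j ∈ D.U := fun j hj => hf j (mem_insert_of_mem hj)
    rw [sum_insert hi, sum_insert hi, D.integral_add (hf i (mem_insert_self i s)) (D.sum_mem s hs),
      ih hs]

lemma integral_mono {f g : X → ℝ} (hf : f ∈ D.U) (hg : g ∈ D.U) (h : f ≤ g) :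
    D.integral f ≤ D.integral g := by
  have := D.integral_nonneg (D.sub_mem hg hf) fun x => sub_nonneg.2 (h x)
  rw [D.integral_sub hg hf] at this
  linarith

lemma abs_integral_le {f : X → ℝ} (hf : f ∈ D.U) : |D.integral f| ≤ D.integral |f| := by
  refine abs_le.2 ⟨?_, D.integral_mono hf (D.abs_mem hf) fun x => le_abs_self (f x)⟩
  have := D.integral_mono (D.neg_mem hf) (D.abs_mem hf) fun x => neg_le_abs (f x)
  rw [D.integral_neg hf] at this
  linarith

lemma tendsto_integral_of_monotone {φ : ℕ → X → ℝ} {p : X → ℝ} (hφ : ∀ n, φ n ∈ D.U)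
    (hp : p ∈ D.U) (hmono : Monotone φ) (hlim : ∀ x, Tendsto (φ · x) atTop (𝓝 (p x))) :
    Tendsto (fun n => D.integral (φ n)) atTop (𝓝 (D.integral p)) := by
  have hgap := D.integral_tendsto_zero (fun n => p - φ n) (fun n => D.sub_mem hp (hφ n))
    (fun a b hab => sub_le_sub_left (hmono hab) p)
    fun x => by simpa using (hlim x).const_sub (p x)
  simpa [D.integral_sub hp (hφ _)] using hgap.const_sub (D.integral p)

lemma integral_le_tsum_of_le_tsum {h : X → ℝ} {g : ℕ → X → ℝ} (hh : h ∈ D.U)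
    (hg : ∀ n, g n ∈ D.U) (hg0 : ∀ n x, 0 ≤ g n x) (hsum : Summable fun n => D.integral (g n))
    (hle : ∀ x, Summable (fun n => g n x) → h x ≤ ∑' n, g n x) :
    D.integral h ≤ ∑' n, D.integral (g n) := by
  set p := h ⊔ 0
  have hp : p ∈ D.U := D.sup_mem hh D.zero_mem
  set S : ℕ → X → ℝ := fun N => ∑ n ∈ range N, g n
  have hS : ∀ N, S N ∈ D.U := fun N => D.sum_mem _ fun n _ => hg n
  have hSx : ∀ N x, S N x = ∑ n ∈ range N, g n x := fun N x => Finset.sum_apply x _ _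
  have hSmono : Monotone S := fun a b hab x => by
    simpa only [hSx] using sum_le_sum_of_subset_of_nonneg (range_mono hab) fun n _ _ => hg0 n x
  -- `p ⊓ S N` increases to `p`, because `p ≤ ∑ gₙ` wherever the series converges.
  have hlim : Tendsto (fun N => D.integral (p ⊓ S N)) atTop (𝓝 (D.integral p)) :=
    D.tendsto_integral_of_monotone (fun N => D.inf_mem hp (hS N)) hp
      (fun a b hab => inf_le_inf_left p (hSmono hab)) fun x => by
        simpa only [p, Pi.inf_apply, Pi.sup_apply, Pi.zero_apply, hSx] using
          tendsto_min_sum_range_of_le_tsum (hg0 · x)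
            fun hx => max_le (hle x hx) (tsum_nonneg (hg0 · x))
  have hbound : ∀ N, D.integral (p ⊓ S N) ≤ ∑' n, D.integral (g n) := fun N =>
    calc D.integral (p ⊓ S N) ≤ D.integral (S N) :=
          D.integral_mono (D.inf_mem hp (hS N)) (hS N) inf_le_right
      _ = ∑ n ∈ range N, D.integral (g n) := D.integral_sum _ fun n _ => hg n
      _ ≤ ∑' n, D.integral (g n) :=
          hsum.sum_le_tsum _ fun n _ => D.integral_nonneg (hg n) (hg0 n)
  calc D.integral h ≤ D.integral p := D.integral_mono hh hp le_sup_left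
    _ ≤ _ := le_of_tendsto' hlim hbound

variable {D}

lemma Rep.summable_integral {f : X → ℝ} {fs : ℕ → X → ℝ} (h : D.Rep f fs) :
    Summable fun n => D.integral (fs n) :=
  h.2.1.of_norm_bounded fun n => D.abs_integral_le (h.1 n)

lemma Rep.neg {f : X → ℝ} {fs : ℕ → X → ℝ} (h : D.Rep f fs) : D.Rep (-f) (-fs) := by
  obtain ⟨hU, hsum, hpt⟩ := h
  exact ⟨fun n => D.neg_mem (hU n), by simpa using hsum,
    fun x hx => (hpt x (by simpa using hx)).neg⟩

lemma Rep.interleave {f g : X → ℝ} {fs gs : ℕ → X → ℝ} (hf : D.Rep f fs) (hg : D.Rep g gs) :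
    D.Rep (f + g) (fs ⋈ gs) := by
  obtain ⟨hfU, hfsum, hfpt⟩ := hf
  obtain ⟨hgU, hgsum, hgpt⟩ := hg
  refine ⟨fun n => ?_, ?_, fun x hx => ?_⟩
  · obtain ⟨k, rfl | rfl⟩ := Nat.even_or_odd' n
    · exact (congrArg (· ∈ D.U) (Stream'.get_interleave_left k fs gs)).mpr (hfU k)
    · exact (congrArg (· ∈ D.U) (Stream'.get_interleave_right k fs gs)).mpr (hgU k)
  · exact (HasSum.interleave (fun u : X → ℝ => D.integral |u|) hfsum.hasSum hgsum.hasSum).summable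
  · exact HasSum.interleave (fun u : X → ℝ => u x)
      (hfpt x (hx.of_interleave_left fun u : X → ℝ => |u x|))
      (hgpt x (hx.of_interleave_right fun u : X → ℝ => |u x|))

lemma Rep.abs_sum_integral_le_tsum_integral_abs_nat_add {d : ℕ → X → ℝ} (hd : D.Rep 0 d)
    (M : ℕ) : |∑ n ∈ range M, D.integral (d n)| ≤ ∑' k, D.integral |d (k + M)| := by
  obtain ⟨hdU, hsum, hzero⟩ := hd
  set s := ∑ n ∈ range M, d n
  have hs : s ∈ D.U := D.sum_mem _ fun n _ => hdU n
  -- Where `∑ |dₙ x|` converges, `∑ dₙ x = 0`, so `s x` is minus the tail of the series.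
  have hpt : ∀ x, Summable (fun k => |d (k + M) x|) → |s x| ≤ ∑' k, |d (k + M) x| := by
    intro x hx
    have hx' : Summable fun n => |d n x| := (summable_nat_add_iff M).1 hx
    have hsplit := hx'.of_abs.sum_add_tsum_nat_add M
    rw [(hzero x hx').tsum_eq, ← Finset.sum_apply, Pi.zero_apply, add_eq_zero_iff_eq_neg] at hsplit
    rw [show s x = _ from hsplit, abs_neg]
    simpa only [Real.norm_eq_abs] using norm_tsum_le_tsum_norm (f := fun k => d (k + M) x)
      (by simpa only [Real.norm_eq_abs] using hx)
  have hle : ∀ h ∈ D.U, (∀ x, h x ≤ |s x|) → D.integral h ≤ ∑' k, D.integral |d (k + M)| :=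
    fun h hh hhs => D.integral_le_tsum_of_le_tsum hh (fun k => D.abs_mem (hdU _))
      (fun k x => abs_nonneg (d (k + M) x)) ((summable_nat_add_iff M).2 hsum)
      fun x hx => (hhs x).trans (hpt x hx)
  rw [← D.integral_sum _ fun n _ => hdU n, abs_le]
  refine ⟨?_, hle s hs fun x => le_abs_self _⟩
  have := hle (-s) (D.neg_mem hs) fun x => neg_le_abs _
  rw [D.integral_neg hs] at this
  linarith

lemma Rep.tsum_integral_eq_zero {d : ℕ → X → ℝ} (hd : D.Rep 0 d) :
    ∑' n, D.integral (d n) = 0 :=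
  abs_nonpos_iff.1 <| le_of_tendsto_of_tendsto' hd.summable_integral.hasSum.tendsto_sum_nat.abs
    (tendsto_sum_nat_add fun n => D.integral |d n|) hd.abs_sum_integral_le_tsum_integral_abs_nat_add

end DaniellSpace

theorem daniell_rep_integral_well_defined_general {X : Type*} (D : DaniellSpace X)
    (f : X → ℝ) (fs gs : ℕ → X → ℝ) (hfs : D.Rep f fs) (hgs : D.Rep f gs) :
    ∑' n, D.integral (fs n) = ∑' n, D.integral (gs n) := by
  have hdiff : D.Rep 0 (fs ⋈ -gs) := add_neg_cancel f ▸ hfs.interleave hgs.neg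
  have hsplit := HasSum.interleave D.integral hfs.summable_integral.hasSum
    hgs.neg.summable_integral.hasSum
  have hneg : ∑' n, D.integral ((-gs) n) = -∑' n, D.integral (gs n) := by
    rw [← tsum_neg]
    exact tsum_congr fun n => D.integral_neg (hgs.1 n)
  linarith [hsplit.tsum_eq.symm.trans hdiff.tsum_integral_eq_zero]

/-- If `f ≃ ∑ fₙ` and `f ≃ ∑ gₙ`, then `∑ ∫fₙ = ∑ ∫gₙ`. -/
theorem daniell_rep_integral_well_defined {X : Type*} [Nonempty X] (D : DaniellSpace X)
    (f : X → ℝ) (fs gs : ℕ → X → ℝ) (hfs : D.Rep f fs) (hgs : D.Rep f gs) :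
    ∑' n, D.integral (fs n) = ∑' n, D.integral (gs n) :=
  daniell_rep_integral_well_defined_general D f fs gs hfs hgs
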